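/- Fixed-α best-case identity: Let s₁, …, s_N ∈ ℝⁿ with empirical measure Q_N, sample mean s̄ and empirical covariance Σ. Let φ ∈ ℝⁿ with φ ≠ 0, δ > 0, and let α ∈ ℝ satisfy C² ≤ δ·‖φ‖₂² where C := α − φ·s̄. Then inf{ φᵀΣ_Q φ : Q ∈ U_δ(Q_N), E^Q[φ·S] = α } = max(√(φᵀΣφ) − √(δ·‖φ‖₂² − C²), 0)², where φᵀΣ_Q φ = E^Q[(φ·S)²] − α². -/

import Mathlib

/-!
Write `f = eDot φ` and `C = α − E^P[f]`. If a coupling of `X ∼ Q` and `S ∼ P` has quadratic cost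
at most `δ`, Cauchy–Schwarz gives `E[(f X − f S)²] ≤ δ‖φ‖²`, so once `E^Q[f] = α` is fixed the
difference `f X − f S` has variance at most `δ‖φ‖² − C²`. Minkowski's inequality for standard
deviations, `sd(f S) ≤ sd(f X) + sd(f X − f S)`, then bounds `sd_Q(f)` below by
`√(φᵀΣφ) − √(δ‖φ‖² − C²)`. The bound is attained by moving every point along `φ` so that `f`
becomes `α + k (f − E^P[f])`: the mean becomes `α`, the variance is multiplied by `k²`, and the
cost is `(C² + (1 − k)² φᵀΣφ) / ‖φ‖²`.
-/

open MeasureTheory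
open scoped ENNReal BigOperators

/-- Euclidean dot product on `Fin n → ℝ`. -/
noncomputable def eDot {n : ℕ} (a b : Fin n → ℝ) : ℝ := ∑ i, a i * b i

/-- Transport cost of a coupling `π` for the quadratic cost `c(u,v) = ‖u − v‖₂²`. -/
noncomputable def transportCost {n : ℕ}
    (π : Measure ((Fin n → ℝ) × (Fin n → ℝ))) : ℝ≥0∞ :=
  ∫⁻ p, ENNReal.ofReal (∑ i, (p.1 i - p.2 i) ^ 2) ∂π

/-- Optimal transport cost `D_c(Q, Q')` with quadratic cost `c(u,v) = ‖u − v‖₂²`. -/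
noncomputable def otCost {n : ℕ} (Q Q' : Measure (Fin n → ℝ)) : ℝ≥0∞ :=
  sInf { r | ∃ π : Measure ((Fin n → ℝ) × (Fin n → ℝ)),
      IsProbabilityMeasure π ∧ π.map Prod.fst = Q ∧ π.map Prod.snd = Q' ∧
      r = transportCost π }

/-- Empirical measure `Q_N = (1/N)·Σᵢ δ_{sᵢ}` of the sample points `s₁, …, s_N`. -/
noncomputable def empiricalMeasure {n N : ℕ} (s : Fin N → (Fin n → ℝ)) :
    Measure (Fin n → ℝ) :=
  (N : ℝ≥0∞)⁻¹ • ∑ i, Measure.dirac (s i)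

open ProbabilityTheory Filter Topology

section DotProduct

variable {n : ℕ} (φ : Fin n → ℝ)

@[fun_prop]
lemma measurable_eDot : Measurable (eDot φ) := by
  unfold eDot
  fun_prop

lemma eDot_add_smul_self (u : Fin n → ℝ) (t : ℝ) :
    eDot φ (u + t • φ) = eDot φ u + t * ∑ i, φ i ^ 2 := by
  simp only [eDot, Pi.add_apply, Pi.smul_apply, smul_eq_mul, mul_add, Finset.sum_add_distrib,
    Finset.mul_sum]
  congr 1
  exact Finset.sum_congr rfl fun i _ => by ring

lemma eDot_const_mul_sum {N : ℕ} (c : ℝ) (s : Fin N → Fin n → ℝ) :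
    eDot φ (fun j => c * ∑ i, s i j) = c * ∑ i, eDot φ (s i) := by
  simp only [eDot, Finset.mul_sum]
  rw [Finset.sum_comm]
  exact Finset.sum_congr rfl fun i _ => Finset.sum_congr rfl fun j _ => by ring

lemma sq_eDot_sub_le (u v : Fin n → ℝ) :
    (eDot φ u - eDot φ v) ^ 2 ≤ (∑ i, φ i ^ 2) * ∑ i, (u i - v i) ^ 2 := by
  have h : eDot φ u - eDot φ v = ∑ i, φ i * (u i - v i) := by
    simp only [eDot, mul_sub, Finset.sum_sub_distrib]
  rw [h]
  exact Finset.sum_mul_sq_le_sq_mul_sq _ _ _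

end DotProduct

lemma exists_mul_eq_max_sub_zero {s d : ℝ} (hs : 0 ≤ s) (hd : 0 ≤ d) :
    ∃ k : ℝ, k * s = max (s - d) 0 ∧ |(1 - k) * s| ≤ d := by
  rcases hs.eq_or_lt with rfl | hs
  · exact ⟨0, by simp [hd], by simpa using hd⟩
  · refine ⟨max (s - d) 0 / s, div_mul_cancel₀ _ hs.ne', ?_⟩
    rw [sub_mul, one_mul, div_mul_cancel₀ _ hs.ne', abs_le]
    constructor <;> rcases max_cases (s - d) 0 with h | h <;> linarith

section Variance

variable {Ω : Type*} [MeasurableSpace Ω] {μ : Measure Ω} {X Y : Ω → ℝ}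

lemma sq_covariance_le_variance_mul [IsFiniteMeasure μ] (hX : MemLp X 2 μ) (hY : MemLp Y 2 μ) :
    cov[X, Y; μ] ^ 2 ≤ Var[X; μ] * Var[Y; μ] := by
  have hquad : ∀ t : ℝ, 0 ≤ Var[X; μ] * (t * t) + 2 * cov[X, Y; μ] * t + Var[Y; μ] := by
    intro t
    have h := variance_nonneg (t • X + Y) μ
    rw [variance_add (hX.const_smul t) hY, variance_smul, covariance_smul_left] at h
    linarith
  have h := discrim_le_zero hquad
  rw [discrim] at h
  linarith

lemma sqrt_variance_sub_le [IsFiniteMeasure μ] (hX : MemLp X 2 μ) (hY : MemLp Y 2 μ) :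
    √Var[X - Y; μ] ≤ √Var[X; μ] + √Var[Y; μ] := by
  have hcov : -cov[X, Y; μ] ≤ √Var[X; μ] * √Var[Y; μ] := by
    rw [← Real.sqrt_mul (variance_nonneg X μ)]
    exact (neg_le_abs _).trans (Real.abs_le_sqrt (sq_covariance_le_variance_mul hX hY))
  refine Real.sqrt_le_iff.2 ⟨by positivity, ?_⟩
  rw [variance_sub hX hY, add_sq, Real.sq_sqrt (variance_nonneg X μ),
    Real.sq_sqrt (variance_nonneg Y μ)]
  linarith

lemma MeasureTheory.MemLp.const_add_mul_sub [IsFiniteMeasure μ] {p : ℝ≥0∞} (hX : MemLp X p μ)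
    (a b c : ℝ) : MemLp (fun ω => a + b * (X ω - c)) p μ :=
  (memLp_const a).add ((hX.sub (memLp_const c)).const_mul b)

variable [IsProbabilityMeasure μ]

lemma integral_const_add_mul_sub_integral (hX : Integrable X μ) (a b : ℝ) :
    ∫ ω, (a + b * (X ω - μ[X])) ∂μ = a := by
  have hY : Integrable (fun ω => X ω - μ[X]) μ := hX.sub (integrable_const _)
  rw [integral_add (integrable_const a) (hY.const_mul b), integral_const_mul,
    integral_sub hX (integrable_const _)]
  simp

lemma variance_const_add_mul_sub (hX : AEStronglyMeasurable X μ) (a b c : ℝ) :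
    Var[fun ω => a + b * (X ω - c); μ] = b ^ 2 * Var[X; μ] := by
  rw [variance_const_add (by fun_prop) a, variance_const_mul, variance_sub_const hX]

lemma integral_const_add_mul_sub_integral_sq (hX : MemLp X 2 μ) (a b : ℝ) :
    ∫ ω, (a + b * (X ω - μ[X])) ^ 2 ∂μ = a ^ 2 + b ^ 2 * Var[X; μ] := by
  have h := variance_eq_sub (hX.const_add_mul_sub a b μ[X])
  rw [variance_const_add_mul_sub hX.1,
    integral_const_add_mul_sub_integral (hX.integrable one_le_two)] at h
  simp only [Pi.pow_apply] at h
  linarith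

end Variance

section Transport

variable {n : ℕ}

lemma integral_sq_eDot_sub_le {π : Measure ((Fin n → ℝ) × (Fin n → ℝ))} {c : ℝ} (hc : 0 ≤ c)
    (hπ : transportCost π ≤ ENNReal.ofReal c) (φ : Fin n → ℝ) :
    ∫ p, (eDot φ p.1 - eDot φ p.2) ^ 2 ∂π ≤ c * ∑ i, φ i ^ 2 := by
  have hnsq : 0 ≤ ∑ i, φ i ^ 2 := by positivity
  rw [integral_eq_lintegral_of_nonneg_ae (ae_of_all _ fun p => sq_nonneg _) (by fun_prop)]
  refine ENNReal.toReal_le_of_le_ofReal (by positivity) ?_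
  calc ∫⁻ p, ENNReal.ofReal ((eDot φ p.1 - eDot φ p.2) ^ 2) ∂π
      ≤ ∫⁻ p, ENNReal.ofReal (∑ i, φ i ^ 2) * ENNReal.ofReal (∑ i, (p.1 i - p.2 i) ^ 2) ∂π :=
        lintegral_mono fun p => by
          rw [← ENNReal.ofReal_mul hnsq]
          exact ENNReal.ofReal_le_ofReal (sq_eDot_sub_le φ p.1 p.2)
    _ = ENNReal.ofReal (∑ i, φ i ^ 2) * transportCost π :=
        lintegral_const_mul' _ _ ENNReal.ofReal_ne_top
    _ ≤ ENNReal.ofReal (∑ i, φ i ^ 2) * ENNReal.ofReal c := by gcongr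
    _ = ENNReal.ofReal (c * ∑ i, φ i ^ 2) := by rw [← ENNReal.ofReal_mul hnsq, mul_comm]

variable {φ : Fin n → ℝ}

lemma sqrt_variance_le_of_transportCost_le {Q P : Measure (Fin n → ℝ)}
    {π : Measure ((Fin n → ℝ) × (Fin n → ℝ))} [IsProbabilityMeasure π]
    (hfst : π.map Prod.fst = Q) (hsnd : π.map Prod.snd = P)
    (hQ : MemLp (eDot φ) 2 Q) (hP : MemLp (eDot φ) 2 P) {c : ℝ} (hc : 0 ≤ c)
    (hπ : transportCost π ≤ ENNReal.ofReal c) :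
    √Var[eDot φ; P] ≤
      √Var[eDot φ; Q] + √(c * ∑ i, φ i ^ 2 - (Q[eDot φ] - P[eDot φ]) ^ 2) := by
  subst hfst hsnd
  set F : (Fin n → ℝ) × (Fin n → ℝ) → ℝ := eDot φ ∘ Prod.fst
  set G : (Fin n → ℝ) × (Fin n → ℝ) → ℝ := eDot φ ∘ Prod.snd
  have hF : MemLp F 2 π := (memLp_map_measure_iff hQ.1 measurable_fst.aemeasurable).1 hQ
  have hG : MemLp G 2 π := (memLp_map_measure_iff hP.1 measurable_snd.aemeasurable).1 hP
  rw [variance_map (by fun_prop) (by fun_prop), variance_map (by fun_prop) (by fun_prop),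
    integral_map (by fun_prop) (by fun_prop), integral_map (by fun_prop) (by fun_prop)]
  have hFG : Var[F - G; π] ≤ c * ∑ i, φ i ^ 2 - (π[F] - π[G]) ^ 2 := by
    rw [variance_eq_sub (hF.sub hG),
      integral_sub' (hF.integrable one_le_two) (hG.integrable one_le_two)]
    have := integral_sq_eDot_sub_le hc hπ φ
    simp only [Pi.pow_apply, Pi.sub_apply, F, G, Function.comp_apply]
    linarith
  calc √Var[G; π] = √Var[F - (F - G); π] := by rw [sub_sub_cancel]
    _ ≤ √Var[F; π] + √Var[F - G; π] := sqrt_variance_sub_le hF (hF.sub hG)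
    _ ≤ _ := add_le_add le_rfl (Real.sqrt_le_sqrt hFG)

lemma sqrt_variance_le_of_otCost_le {Q P : Measure (Fin n → ℝ)}
    (hQ : MemLp (eDot φ) 2 Q) (hP : MemLp (eDot φ) 2 P) {δ : ℝ} (hδ : 0 ≤ δ)
    (h : otCost Q P ≤ ENNReal.ofReal δ) :
    √Var[eDot φ; P] ≤
      √Var[eDot φ; Q] + √(δ * ∑ i, φ i ^ 2 - (Q[eDot φ] - P[eDot φ]) ^ 2) := by
  set D := (Q[eDot φ] - P[eDot φ]) ^ 2
  have hη : ∀ η ∈ Set.Ioi (0 : ℝ),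
      √Var[eDot φ; P] ≤ √Var[eDot φ; Q] + √((δ + η) * ∑ i, φ i ^ 2 - D) := by
    intro η hη
    have hlt : otCost Q P < ENNReal.ofReal (δ + η) :=
      h.trans_lt ((ENNReal.ofReal_lt_ofReal_iff (by linarith [hη.out])).2 (by linarith [hη.out]))
    obtain ⟨_, ⟨π, hπ, hfst, hsnd, rfl⟩, hcost⟩ := sInf_lt_iff.1 hlt
    exact sqrt_variance_le_of_transportCost_le hfst hsnd hQ hP (by linarith [hη.out]) hcost.le
  have hlim : Tendsto (fun η => √Var[eDot φ; Q] + √((δ + η) * ∑ i, φ i ^ 2 - D))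
      (𝓝[>] 0) (𝓝 (√Var[eDot φ; Q] + √(δ * ∑ i, φ i ^ 2 - D))) := by
    have hcont : Continuous fun η => √Var[eDot φ; Q] + √((δ + η) * ∑ i, φ i ^ 2 - D) := by
      fun_prop
    simpa using hcont.continuousAt (x := 0) |>.tendsto.mono_left nhdsWithin_le_nhds
  exact ge_of_tendsto hlim (eventually_nhdsWithin_of_forall hη)

lemma exists_otCost_le_variance_eq {P : Measure (Fin n → ℝ)} [IsProbabilityMeasure P]
    (hP : MemLp (eDot φ) 2 P) (hφ : 0 < ∑ i, φ i ^ 2) {α k δ : ℝ}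
    (hk : (α - P[eDot φ]) ^ 2 + (k - 1) ^ 2 * Var[eDot φ; P] ≤ δ * ∑ i, φ i ^ 2) :
    ∃ Q : Measure (Fin n → ℝ), IsProbabilityMeasure Q ∧ otCost Q P ≤ ENNReal.ofReal δ ∧
      MemLp (eDot φ) 2 Q ∧ Q[eDot φ] = α ∧ Var[eDot φ; Q] = k ^ 2 * Var[eDot φ; P] := by
  set m := P[eDot φ]
  set g : (Fin n → ℝ) → ℝ := fun u => α + k * (eDot φ u - m)
  set T : (Fin n → ℝ) → (Fin n → ℝ) := fun u => u + ((g u - eDot φ u) / ∑ i, φ i ^ 2) • φ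
  have hT : Measurable T := by fun_prop
  have hgT : eDot φ ∘ T = g := funext fun u => by
    simp [T, eDot_add_smul_self, div_mul_cancel₀ _ hφ.ne']
  have hQ : IsProbabilityMeasure (P.map T) := Measure.isProbabilityMeasure_map hT.aemeasurable
  refine ⟨P.map T, hQ, ?_, ?_, ?_, ?_⟩
  · have hπ : IsProbabilityMeasure (P.map fun u => (T u, u)) :=
      Measure.isProbabilityMeasure_map (by fun_prop)
    have hdisp : ∀ u, ∑ i, (T u i - u i) ^ 2 =
        ((α - m) + (k - 1) * (eDot φ u - m)) ^ 2 / ∑ i, φ i ^ 2 := by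
      intro u
      simp only [T, g, Pi.add_apply, Pi.smul_apply, smul_eq_mul, add_sub_cancel_left, mul_pow,
        ← Finset.mul_sum]
      field_simp
      ring
    have hint : Integrable
        (fun u => ((α - m) + (k - 1) * (eDot φ u - m)) ^ 2 / ∑ i, φ i ^ 2) P :=
      (hP.const_add_mul_sub (α - m) (k - 1) m).integrable_sq.div_const _
    calc otCost (P.map T) P ≤ transportCost (P.map fun u => (T u, u)) :=
          sInf_le ⟨_, hπ, by rw [Measure.map_map measurable_fst (by fun_prop)]; rfl,
            by rw [Measure.map_map measurable_snd (by fun_prop)]; exact Measure.map_id, rfl⟩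
      _ = ENNReal.ofReal (∫ u, ((α - m) + (k - 1) * (eDot φ u - m)) ^ 2 / ∑ i, φ i ^ 2 ∂P) := by
          rw [transportCost, lintegral_map (by fun_prop) (by fun_prop),
            ofReal_integral_eq_lintegral_ofReal hint (ae_of_all _ fun u => by positivity)]
          simp only [hdisp]
      _ ≤ ENNReal.ofReal δ := by
          refine ENNReal.ofReal_le_ofReal ?_
          rw [integral_div, integral_const_add_mul_sub_integral_sq hP, div_le_iff₀ hφ]
          exact hk
  · rw [memLp_map_measure_iff (by fun_prop) hT.aemeasurable, hgT]
    exact hP.const_add_mul_sub α k m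
  · rw [integral_map hT.aemeasurable (by fun_prop)]
    change ∫ u, (eDot φ ∘ T) u ∂P = α
    rw [hgT]
    exact integral_const_add_mul_sub_integral (hP.integrable one_le_two) α k
  · rw [variance_map (by fun_prop) hT.aemeasurable, hgT]
    exact variance_const_add_mul_sub hP.1 α k m

end Transport

section Empirical

variable {n N : ℕ} (s : Fin N → Fin n → ℝ)

lemma isProbabilityMeasure_empiricalMeasure (hN : 0 < N) :
    IsProbabilityMeasure (empiricalMeasure s) := by
  constructor
  simp [empiricalMeasure, ENNReal.inv_mul_cancel, hN.ne']

lemma integrable_empiricalMeasure (hN : 0 < N) (g : (Fin n → ℝ) → ℝ) :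
    Integrable g (empiricalMeasure s) :=
  (integrable_finsetSum_measure.2 fun _ _ => integrable_dirac (by simp)).smul_measure
    (by simp [hN.ne'])

lemma integral_empiricalMeasure (g : (Fin n → ℝ) → ℝ) :
    ∫ x, g x ∂empiricalMeasure s = (N : ℝ)⁻¹ * ∑ i, g (s i) := by
  rw [empiricalMeasure, integral_smul_measure,
    integral_finsetSum_measure fun _ _ => integrable_dirac (by simp)]
  simp [integral_dirac]

end Empirical

def momentConstrainedVariances {n : ℕ} (P : Measure (Fin n → ℝ)) (φ : Fin n → ℝ) (δ α : ℝ) :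
    Set ℝ :=
  { v | ∃ Q : Measure (Fin n → ℝ), IsProbabilityMeasure Q ∧
      otCost Q P ≤ ENNReal.ofReal δ ∧
      Integrable (fun x => eDot φ x) Q ∧ Integrable (fun x => (eDot φ x) ^ 2) Q ∧
      (∫ x, eDot φ x ∂Q) = α ∧ v = (∫ x, (eDot φ x) ^ 2 ∂Q) - α ^ 2 }

theorem isLeast_momentConstrainedVariances {n : ℕ} {P : Measure (Fin n → ℝ)}
    [IsProbabilityMeasure P] {φ : Fin n → ℝ} (hP : MemLp (eDot φ) 2 P) (hφ : φ ≠ 0) {δ α : ℝ}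
    (hC : (α - P[eDot φ]) ^ 2 ≤ δ * ∑ i, φ i ^ 2) :
    IsLeast (momentConstrainedVariances P φ δ α)
      (max (√Var[eDot φ; P] - √(δ * ∑ i, φ i ^ 2 - (α - P[eDot φ]) ^ 2)) 0 ^ 2) := by
  have hnsq : 0 < ∑ i, φ i ^ 2 := by
    obtain ⟨i, hi⟩ := Function.ne_iff.1 hφ
    exact (Finset.sum_pos_iff_of_nonneg fun j _ => sq_nonneg (φ j)).2
      ⟨i, Finset.mem_univ _, sq_pos_of_ne_zero hi⟩
  have hΔ : 0 ≤ δ * ∑ i, φ i ^ 2 - (α - P[eDot φ]) ^ 2 := sub_nonneg.2 hC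
  have hV := variance_nonneg (eDot φ) P
  constructor
  · obtain ⟨k, hkR, hk⟩ := exists_mul_eq_max_sub_zero (Real.sqrt_nonneg _) (Real.sqrt_nonneg _)
    have hcost : (α - P[eDot φ]) ^ 2 + (k - 1) ^ 2 * Var[eDot φ; P] ≤ δ * ∑ i, φ i ^ 2 := by
      have h := pow_le_pow_left₀ (abs_nonneg _) hk 2
      rw [sq_abs, Real.sq_sqrt hΔ, mul_pow, Real.sq_sqrt hV] at h
      nlinarith
    obtain ⟨Q, hQ, hQP, hQ2, hmean, hvar⟩ := exists_otCost_le_variance_eq hP hnsq hcost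
    refine ⟨Q, hQ, hQP, hQ2.integrable one_le_two, hQ2.integrable_sq, hmean, ?_⟩
    rw [← hkR, mul_pow, Real.sq_sqrt hV, ← hvar, variance_eq_sub hQ2, hmean]
    rfl
  · rintro v ⟨Q, hQ, hQP, -, hQ2, hmean, rfl⟩
    have hQ2 : MemLp (eDot φ) 2 Q := (memLp_two_iff_integrable_sq (by fun_prop)).2 hQ2
    have hδ : 0 ≤ δ := (mul_nonneg_iff_of_pos_right hnsq).1 ((sq_nonneg _).trans hC)
    have h := sqrt_variance_le_of_otCost_le hQ2 hP hδ hQP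
    rw [hmean] at h
    have hv : ∫ x, eDot φ x ^ 2 ∂Q - α ^ 2 = Var[eDot φ; Q] := by
      rw [variance_eq_sub hQ2, hmean]
      rfl
    rw [hv, ← Real.le_sqrt (by positivity) (variance_nonneg _ _)]
    exact max_le (by linarith) (Real.sqrt_nonneg _)

theorem stmt_7_general {n N : ℕ} (hN : 0 < N) (s : Fin N → (Fin n → ℝ))
    (φ : Fin n → ℝ) (hφ : φ ≠ 0) (δ : ℝ) (α : ℝ) :
    let sbar : Fin n → ℝ := fun j => (N : ℝ)⁻¹ * ∑ i, s i j
    let μbar : ℝ := eDot φ sbar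
    let C : ℝ := α - μbar
    let V : ℝ := (N : ℝ)⁻¹ * ∑ i, (eDot φ (s i) - μbar) ^ 2
    let nsq : ℝ := ∑ i, φ i ^ 2
    C ^ 2 ≤ δ * nsq →
    sInf { v | ∃ Q : Measure (Fin n → ℝ), IsProbabilityMeasure Q ∧
        otCost Q (empiricalMeasure s) ≤ ENNReal.ofReal δ ∧
        Integrable (fun x => eDot φ x) Q ∧ Integrable (fun x => (eDot φ x) ^ 2) Q ∧
        (∫ x, eDot φ x ∂Q) = α ∧ v = (∫ x, (eDot φ x) ^ 2 ∂Q) - α ^ 2 }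
      = (max (Real.sqrt V - Real.sqrt (δ * nsq - C ^ 2)) 0) ^ 2 := by
  intro sbar μbar C V nsq hC
  have := isProbabilityMeasure_empiricalMeasure s hN
  have hmean : (empiricalMeasure s)[eDot φ] = μbar := by
    rw [integral_empiricalMeasure, ← eDot_const_mul_sum]
  have hvar : Var[eDot φ; empiricalMeasure s] = V := by
    rw [variance_eq_integral (by fun_prop), hmean, integral_empiricalMeasure]
  have hP : MemLp (eDot φ) 2 (empiricalMeasure s) :=
    (memLp_two_iff_integrable_sq (by fun_prop)).2 (integrable_empiricalMeasure s hN _)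
  have key := isLeast_momentConstrainedVariances hP hφ (δ := δ) (α := α) (by rwa [hmean])
  rw [hmean, hvar] at key
  exact key.csInf_eq

/-- **Fixed-α best-case identity.**
For `φ ≠ 0`, `δ > 0` and `α` with `C² ≤ δ‖φ‖₂²` where `C = α − φ·s̄`, the
best-case portfolio variance over the moment-constrained Wasserstein ball,
`inf{ E^Q[(φ·S)²] − α² : Q ∈ U_δ(Q_N), E^Q[φ·S] = α }`, equals
`max(√(φᵀΣφ) − √(δ‖φ‖₂² − C²), 0)²` where `Σ` is the empirical covariance. -/
theorem stmt_7 {n N : ℕ} (hN : 0 < N) (s : Fin N → (Fin n → ℝ))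
    (φ : Fin n → ℝ) (hφ : φ ≠ 0) (δ : ℝ) (hδ : 0 < δ) (α : ℝ) :
    let sbar : Fin n → ℝ := fun j => (N : ℝ)⁻¹ * ∑ i, s i j
    let μbar : ℝ := eDot φ sbar
    let C : ℝ := α - μbar
    let V : ℝ := (N : ℝ)⁻¹ * ∑ i, (eDot φ (s i) - μbar) ^ 2
    let nsq : ℝ := ∑ i, φ i ^ 2
    C ^ 2 ≤ δ * nsq →
    sInf { v | ∃ Q : Measure (Fin n → ℝ), IsProbabilityMeasure Q ∧
        otCost Q (empiricalMeasure s) ≤ ENNReal.ofReal δ ∧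
        Integrable (fun x => eDot φ x) Q ∧ Integrable (fun x => (eDot φ x) ^ 2) Q ∧
        (∫ x, eDot φ x ∂Q) = α ∧ v = (∫ x, (eDot φ x) ^ 2 ∂Q) - α ^ 2 }
      = (max (Real.sqrt V - Real.sqrt (δ * nsq - C ^ 2)) 0) ^ 2 :=
  stmt_7_general hN s φ hφ δ α
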